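/- arXiv:2105.01233 — 5 statements merged into one kernel-verified Lean document; each statement's English description precedes it below -/
import Mathlib

section
/- Theorem 1 (revenue adequacy of the chance-constrained pricing scheme). Let the primal variables (p_i, r_i^u, r_i^d, α_i^u, α_i^d, w_n^{sch}, w_n^{spi}, β_n, δ_n^0, δ_n, s_j, γ_j) form an optimal solution of the DCCO linear program and let (λ_n, ν_n, κ_n, μ_n, ρ_i, y_n^{spi}, x_n^{spi}, y_i^u, x_i^u, y_i^d, x_i^d, y_i, x_i, y_j^s, x_j^s) form an optimal solution of its linear programming dual (equivalently, the pair satisfies primal feasibility, dual feasibility and complementary slackness for the DCCO LP). Assume Σ_{j∈𝓙}(L_j − s_j) > 0. Then under the chance-constrained pricing scheme: (i) the market administrator's expected profit is nonnegative: Γ^o := Σ_{n∈𝓑} λ_n(Σ_{j∈𝓙_n} L_j − Σ_{i∈𝓘_n} p_i − w_n^{sch}) − Σ_{n∈𝓑} ν_n(Σ_{i∈𝓘_n}(r_i^u − r_i^d) + Σ_{j∈𝓙_n} s_j + W_n^f − w_n^{sch} − w_n^{spi}) − Σ_{n∈𝓑}(Σ_{i∈𝓘_n}(τ_i^u r_i^u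 + τ_i^d r_i^d) − (y_n^{spi} − x_n^{spi})(W_n^f − w_n^{spi})) + ζ·Σ_{j∈𝓙}(L_j − s_j) ≥ 0; (ii) every VRES generator recovers its cost in expectation: for all n∈𝓑, Γ^{w_n} := (λ_n − ν_n)w_n^{sch} + (C_n^w − ν_n + y_n^{spi} − x_n^{spi})w_n^{spi} + (ν_n − y_n^{spi} + x_n^{spi} − C_n^w)W_n^f ≥ 0; (iii) every conventional generator recovers its cost in expectation: for all i∈𝓘, Γ^{g_i} := (λ_{b(i)} − C_i)p_i + (ν_{b(i)} − C_i^u)r_i^u + (C_i^d − ν_{b(i)})r_i^d + τ_i^u r_i^u + τ_i^d r_i^d ≥ 0. -/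
/-!
Complementary slackness rewrites each profit as a sum of dual prices times nonnegative
primal quantities. For a conventional generator this needs `κ α ≤ τ r` for both reserve
directions, which is what the choice of the adder `τ` guarantees: either `κ ≥ σ' y ≥ 0` and
`α σ' ≤ r`, or `κ < σ' y` and `y r = y α σ'`. For the market administrator the surcharge `ζ`
refunds exactly the reserve and spill payments; the nodal balances turn the rest into payments
for line flows, and weighting the dual constraints of the phase angles by the angles themselves
(summation by parts on the network) leaves the congestion rent `Σ (η⁰ + η) C̄ ≥ 0`.
-/

open Finset

theorem sum_mul_sum_fiberwise {ι κ R : Type*} [Fintype κ] [DecidableEq κ]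
    [NonUnitalNonAssocSemiring R] (s : Finset ι) (g : ι → κ) (f : κ → R) (h : κ → ι → R) :
    ∑ k, f k * ∑ i ∈ s with g i = k, h k i = ∑ i ∈ s, f (g i) * h (g i) i := by
  rw [← sum_fiberwise s g (fun i => f (g i) * h (g i) i)]
  simp_rw [mul_sum]
  exact sum_congr rfl fun k _ => sum_congr rfl fun i hi => by rw [(mem_filter.1 hi).2]

theorem sum_mul_sub_eq_sum_mul_netOutflow {V R : Type*} [Fintype V] [DecidableEq V] [CommRing R]
    (E : Finset (V × V)) (c : V → V × V → R) (x : V → R) :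
    ∑ e ∈ E, c e.1 e * (x e.1 - x e.2)
      = ∑ n, x n * (∑ e ∈ E with e.1 = n, c n e - ∑ e ∈ E with e.2 = n, c e.1 e) := by
  simp_rw [mul_sub, sum_sub_distrib, sum_mul_sum_fiberwise E Prod.fst,
    sum_mul_sum_fiberwise E Prod.snd x (fun _ e => c e.1 e), mul_comm]

theorem sum_mul_sub_eq_zero_of_balanced {V R : Type*} [Fintype V] [DecidableEq V] [CommRing R]
    (E : Finset (V × V)) (c : V → V × V → R) (x : V → R)
    (hc : ∀ n, ∑ e ∈ E with e.1 = n, c n e - ∑ e ∈ E with e.2 = n, c e.1 e = 0) :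
    ∑ e ∈ E, c e.1 e * (x e.1 - x e.2) = 0 := by
  simp [sum_mul_sub_eq_sum_mul_netOutflow, hc]

theorem sum_price_mul_imbalance_eq_congestion_rent {Bus : Type*} [Fintype Bus] [DecidableEq Bus]
    (Lines : Finset (Bus × Bus)) (Bsus : Bus → Bus → ℝ) (Cap : Bus × Bus → ℝ)
    (δ0 δ lam nu a b : Bus → ℝ) (η0 η : Bus × Bus → ℝ)
    (ha : ∀ n, a n = -∑ e ∈ Lines with e.1 = n, Bsus e.1 e.2 * (δ0 e.1 - δ0 e.2))
    (hb : ∀ n, b n = -∑ e ∈ Lines with e.1 = n,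
        Bsus e.1 e.2 * (δ0 e.1 - δ e.1 - δ0 e.2 + δ e.2))
    (dfδ0 : ∀ n, ∑ e ∈ Lines with e.1 = n, Bsus e.1 e.2 * (lam n - nu n + η0 e)
        - ∑ e ∈ Lines with e.2 = n, Bsus e.1 e.2 * (lam e.1 - nu e.1 + η0 e) = 0)
    (dfδ : ∀ n, ∑ e ∈ Lines with e.1 = n, Bsus e.1 e.2 * (nu n + η e)
        - ∑ e ∈ Lines with e.2 = n, Bsus e.1 e.2 * (nu e.1 + η e) = 0)
    (csη0 : ∀ e ∈ Lines, η0 e * (Cap e - Bsus e.1 e.2 * (δ0 e.1 - δ0 e.2)) = 0)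
    (csη : ∀ e ∈ Lines, η e * (Cap e - Bsus e.1 e.2 * (δ e.1 - δ e.2)) = 0) :
    ∑ n, lam n * a n - ∑ n, nu n * b n = ∑ e ∈ Lines, (η0 e + η e) * Cap e := by
  have hA : ∑ n, lam n * a n = -∑ e ∈ Lines, lam e.1 * (Bsus e.1 e.2 * (δ0 e.1 - δ0 e.2)) := by
    simp only [ha, mul_neg, sum_neg_distrib,
      sum_mul_sum_fiberwise Lines Prod.fst lam (fun _ e => Bsus e.1 e.2 * (δ0 e.1 - δ0 e.2))]
  have hB : ∑ n, nu n * b n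
      = -∑ e ∈ Lines, nu e.1 * (Bsus e.1 e.2 * (δ0 e.1 - δ e.1 - δ0 e.2 + δ e.2)) := by
    simp only [hb, mul_neg, sum_neg_distrib, sum_mul_sum_fiberwise Lines Prod.fst nu
      (fun _ e => Bsus e.1 e.2 * (δ0 e.1 - δ e.1 - δ0 e.2 + δ e.2))]
  have h0 := sum_mul_sub_eq_zero_of_balanced Lines
    (fun n e => Bsus e.1 e.2 * (lam n - nu n + η0 e)) δ0 dfδ0
  have h1 := sum_mul_sub_eq_zero_of_balanced Lines (fun n e => Bsus e.1 e.2 * (nu n + η e)) δ dfδ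
  calc ∑ n, lam n * a n - ∑ n, nu n * b n
      = ∑ e ∈ Lines, ((η0 e + η e) * Cap e
          - Bsus e.1 e.2 * (lam e.1 - nu e.1 + η0 e) * (δ0 e.1 - δ0 e.2)
          - Bsus e.1 e.2 * (nu e.1 + η e) * (δ e.1 - δ e.2)) := by
        rw [hA, hB, sub_neg_eq_add, neg_add_eq_sub, ← sum_sub_distrib]
        exact sum_congr rfl fun e he => by linear_combination -csη0 e he - csη e he
    _ = ∑ e ∈ Lines, (η0 e + η e) * Cap e := by
        rw [sum_sub_distrib, sum_sub_distrib, h0, h1, sub_zero, sub_zero]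

/-- The reserve price adder of the pricing scheme: `τ_i^u = reserveAdder κ_{b(i)} σ'_i y_i^u`. -/
noncomputable def reserveAdder (κ σ' y : ℝ) : ℝ :=
  if 0 ≤ κ - σ' * y then κ / σ' else y

theorem mul_le_reserveAdder_mul {κ σ' y a r : ℝ} (hσ' : 0 < σ') (hy : 0 ≤ y) (ha : 0 ≤ a)
    (hr : r - a * σ' ≥ 0) (hcs : y * (r - a * σ') = 0) :
    κ * a ≤ reserveAdder κ σ' y * r := by
  unfold reserveAdder
  split_ifs with hκ
  · have hκ0 : 0 ≤ κ := by nlinarith [mul_nonneg hσ'.le hy]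
    rw [div_mul_eq_mul_div, le_div_iff₀ hσ']
    nlinarith [mul_le_mul_of_nonneg_left (sub_nonneg.1 hr) hκ0]
  · nlinarith [mul_le_mul_of_nonneg_left (not_le.1 hκ).le ha]

theorem vres_profit_nonneg {lam nu mu Cw y x wsch wspi Wf : ℝ} (hmu : 0 ≤ mu) (hwsch : 0 ≤ wsch)
    (hWf : 0 ≤ Wf) (dfwspi : 0 ≤ -Cw + nu - y + x) (dswsch : wsch * (-lam + nu + mu) = 0)
    (dswspi : wspi * (-Cw + nu - y + x) = 0) :
    0 ≤ (lam - nu) * wsch + (Cw - nu + y - x) * wspi + (nu - y + x - Cw) * Wf := by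
  have h : (lam - nu) * wsch + (Cw - nu + y - x) * wspi + (nu - y + x - Cw) * Wf
      = mu * wsch + (-Cw + nu - y + x) * Wf := by
    linear_combination -dswsch - dswspi
  rw [h]
  positivity

theorem generator_profit_nonneg {lam nu kap C Cu Cd Pbar σ' p ru rd au ad ρ yu xu yd xd yy xx : ℝ}
    (hσ' : 0 < σ') (hPbar : 0 ≤ Pbar) (hp : 0 ≤ p) (hru : 0 ≤ ru) (hrd : 0 ≤ rd)
    (hau : 0 ≤ au) (had : 0 ≤ ad) (hρ : 0 ≤ ρ) (hyu : 0 ≤ yu) (hxu : 0 ≤ xu)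
    (hyd : 0 ≤ yd) (hxd : 0 ≤ xd) (hxx : 0 ≤ xx)
    (hruL : ru - au * σ' ≥ 0) (hrdL : rd - ad * σ' ≥ 0)
    (csyu : yu * (ru - au * σ') = 0) (csyd : yd * (rd - ad * σ') = 0)
    (csyy : yy * (p + ru - rd - (au + ad) * σ') = 0)
    (csxx : xx * (Pbar - p - ru + rd - (au + ad) * σ') = 0)
    (dsp : p * (C - lam + ρ - yy + xx) = 0)
    (dsru : ru * (Cu - nu - yu + xu - yy + xx) = 0)
    (dsrd : rd * (-Cd + nu - yd + xd + yy - xx) = 0)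
    (dsau : au * (-kap + σ' * (yu + xu + yy + xx)) = 0)
    (dsad : ad * (-kap + σ' * (yd + xd + yy + xx)) = 0) :
    0 ≤ (lam - C) * p + (nu - Cu) * ru + (Cd - nu) * rd
      + reserveAdder kap σ' yu * ru + reserveAdder kap σ' yd * rd := by
  have h : (lam - C) * p + (nu - Cu) * ru + (Cd - nu) * rd
        + reserveAdder kap σ' yu * ru + reserveAdder kap σ' yd * rd
      = ρ * p + xu * ru + xd * rd + xx * Pbar + au * σ' * xu + ad * σ' * xd
        + (reserveAdder kap σ' yu * ru - kap * au) + (reserveAdder kap σ' yd * rd - kap * ad) := by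
    linear_combination -dsp - dsru - dsrd - dsau - dsad - csyu - csyd - csyy - csxx
  rw [h]
  linarith [mul_le_reserveAdder_mul (κ := kap) hσ' hyu hau hruL csyu,
    mul_le_reserveAdder_mul (κ := kap) hσ' hyd had hrdL csyd,
    mul_nonneg hρ hp, mul_nonneg hxu hru, mul_nonneg hxd hrd, mul_nonneg hxx hPbar,
    mul_nonneg (mul_nonneg hau hσ'.le) hxu, mul_nonneg (mul_nonneg had hσ'.le) hxd]

theorem cco_pricing_revenue_adequacy_general
    {Bus Gen Load : Type*} [Fintype Bus] [Fintype Gen] [Fintype Load] [DecidableEq Bus]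
    (bI : Gen → Bus) (bJ : Load → Bus)
    (Lines : Finset (Bus × Bus))
    (Bsus : Bus → Bus → ℝ) (Cap : Bus × Bus → ℝ) (hCap : ∀ e ∈ Lines, 0 ≤ Cap e)
    (C Cu Cd : Gen → ℝ) (Cw : Bus → ℝ)
    (Ld : Load → ℝ)
    (Pbar : Gen → ℝ)
    (hPbar : ∀ i, 0 ≤ Pbar i)
    (Wf : Bus → ℝ) (hWf : ∀ n, 0 ≤ Wf n)
    (σ : Bus → ℝ) (hσ : ∀ n, 0 < σ n) (q : ℝ) (hq : 0 < q)
    -- primal variables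
    (p ru rd au ad : Gen → ℝ) (wsch wspi δ0 δ : Bus → ℝ) (s : Load → ℝ)
    -- dual variables
    (lam nu kap mu yspi xspi : Bus → ℝ)
    (ρ yu xu yd xd yy xx : Gen → ℝ)
    (η0 η : Bus × Bus → ℝ)
    -- primal feasibility: nonnegativity
    (hp : ∀ i, 0 ≤ p i) (hru : ∀ i, 0 ≤ ru i) (hrd : ∀ i, 0 ≤ rd i)
    (hau : ∀ i, 0 ≤ au i) (had : ∀ i, 0 ≤ ad i)
    (hwsch : ∀ n, 0 ≤ wsch n)
    -- primal feasibility: scheduling-stage balance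
    (hbal0 : ∀ n, (∑ i ∈ univ.filter (fun i => bI i = n), p i) + wsch n
        - (∑ e ∈ Lines.filter (fun e => e.1 = n), Bsus e.1 e.2 * (δ0 e.1 - δ0 e.2))
        = ∑ j ∈ univ.filter (fun j => bJ j = n), Ld j)
    -- primal feasibility: real-time balance
    (hbal1 : ∀ n, (∑ i ∈ univ.filter (fun i => bI i = n), (ru i - rd i))
        + (∑ j ∈ univ.filter (fun j => bJ j = n), s j)
        + (Wf n - wsch n - wspi n)
        + (∑ e ∈ Lines.filter (fun e => e.1 = n),
            Bsus e.1 e.2 * (δ0 e.1 - δ e.1 - δ0 e.2 + δ e.2)) = 0)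
    -- primal feasibility: bounds
    (hruL : ∀ i, ru i - au i * (q * σ (bI i)) ≥ 0)
    (hrdL : ∀ i, rd i - ad i * (q * σ (bI i)) ≥ 0)
    -- dual feasibility: nonnegativity of inequality duals
    (hmu : ∀ n, 0 ≤ mu n) (hρ : ∀ i, 0 ≤ ρ i)
    (hyu : ∀ i, 0 ≤ yu i) (hxu : ∀ i, 0 ≤ xu i)
    (hyd : ∀ i, 0 ≤ yd i) (hxd : ∀ i, 0 ≤ xd i)
    (hxx : ∀ i, 0 ≤ xx i)
    (hη0 : ∀ e ∈ Lines, 0 ≤ η0 e) (hη : ∀ e ∈ Lines, 0 ≤ η e)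
    -- dual feasibility: one dual constraint per primal variable
    (dfwspi : ∀ n, 0 ≤ -Cw n + nu n - yspi n + xspi n)
    (dfδ0 : ∀ n, (∑ e ∈ Lines.filter (fun e => e.1 = n),
          Bsus e.1 e.2 * (lam n - nu n + η0 e))
        - (∑ e ∈ Lines.filter (fun e => e.2 = n),
          Bsus e.1 e.2 * (lam e.1 - nu e.1 + η0 e)) = 0)
    (dfδ : ∀ n, (∑ e ∈ Lines.filter (fun e => e.1 = n), Bsus e.1 e.2 * (nu n + η e))
        - (∑ e ∈ Lines.filter (fun e => e.2 = n), Bsus e.1 e.2 * (nu e.1 + η e)) = 0)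
    -- complementary slackness: dual variable times primal slack
    (csyu : ∀ i, yu i * (ru i - au i * (q * σ (bI i))) = 0)
    (csyd : ∀ i, yd i * (rd i - ad i * (q * σ (bI i))) = 0)
    (csyy : ∀ i, yy i * (p i + ru i - rd i - (au i + ad i) * (q * σ (bI i))) = 0)
    (csxx : ∀ i, xx i * (Pbar i - p i - ru i + rd i - (au i + ad i) * (q * σ (bI i))) = 0)
    (csη0 : ∀ e ∈ Lines, η0 e * (Cap e - Bsus e.1 e.2 * (δ0 e.1 - δ0 e.2)) = 0)
    (csη : ∀ e ∈ Lines, η e * (Cap e - Bsus e.1 e.2 * (δ e.1 - δ e.2)) = 0)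
    -- complementary slackness: primal variable times dual slack
    (dsp : ∀ i, p i * (C i - lam (bI i) + ρ i - yy i + xx i) = 0)
    (dsru : ∀ i, ru i * (Cu i - nu (bI i) - yu i + xu i - yy i + xx i) = 0)
    (dsrd : ∀ i, rd i * (-Cd i + nu (bI i) - yd i + xd i + yy i - xx i) = 0)
    (dsau : ∀ i, au i * (-kap (bI i) + (q * σ (bI i)) * (yu i + xu i + yy i + xx i)) = 0)
    (dsad : ∀ i, ad i * (-kap (bI i) + (q * σ (bI i)) * (yd i + xd i + yy i + xx i)) = 0)
    (dswsch : ∀ n, wsch n * (-lam n + nu n + mu n) = 0)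
    (dswspi : ∀ n, wspi n * (-Cw n + nu n - yspi n + xspi n) = 0)
    -- positive net scheduled consumption (Assumption 1(ii))
    (hdem : 0 < ∑ j : Load, (Ld j - s j))
    -- reserve price adders and load surcharge of the pricing scheme
    (τu τd : Gen → ℝ)
    (hτu : ∀ i, τu i = if 0 ≤ kap (bI i) - (q * σ (bI i)) * yu i
        then kap (bI i) / (q * σ (bI i)) else yu i)
    (hτd : ∀ i, τd i = if 0 ≤ kap (bI i) - (q * σ (bI i)) * yd i
        then kap (bI i) / (q * σ (bI i)) else yd i)
    (ζ : ℝ)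
    (hζ : ζ = (∑ n : Bus, ((∑ i ∈ univ.filter (fun i => bI i = n), (τu i * ru i + τd i * rd i))
          - (yspi n - xspi n) * (Wf n - wspi n)))
        / (∑ j : Load, (Ld j - s j))) :
    -- (i) revenue adequacy in expectation of the market administrator
    (0 ≤ (∑ n : Bus, lam n * ((∑ j ∈ univ.filter (fun j => bJ j = n), Ld j)
            - (∑ i ∈ univ.filter (fun i => bI i = n), p i) - wsch n))
        - (∑ n : Bus, nu n * ((∑ i ∈ univ.filter (fun i => bI i = n), (ru i - rd i))
            + (∑ j ∈ univ.filter (fun j => bJ j = n), s j) + Wf n - wsch n - wspi n))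
        - (∑ n : Bus, ((∑ i ∈ univ.filter (fun i => bI i = n), (τu i * ru i + τd i * rd i))
            - (yspi n - xspi n) * (Wf n - wspi n)))
        + ζ * (∑ j : Load, (Ld j - s j)))
    -- (ii) cost recovery in expectation of every VRES generator
    ∧ (∀ n : Bus, 0 ≤ (lam n - nu n) * wsch n
        + (Cw n - nu n + yspi n - xspi n) * wspi n
        + (nu n - yspi n + xspi n - Cw n) * Wf n)
    -- (iii) cost recovery in expectation of every conventional generator
    ∧ (∀ i : Gen, 0 ≤ (lam (bI i) - C i) * p i + (nu (bI i) - Cu i) * ru i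
        + (Cd i - nu (bI i)) * rd i + τu i * ru i + τd i * rd i) := by
  refine ⟨?_, fun n => vres_profit_nonneg (hmu n) (hwsch n) (hWf n) (dfwspi n) (dswsch n)
    (dswspi n), fun i => ?_⟩
  · rw [hζ, div_mul_cancel₀ _ hdem.ne', sum_price_mul_imbalance_eq_congestion_rent Lines Bsus Cap
      δ0 δ lam nu _ _ η0 η ?_ ?_ dfδ0 dfδ csη0 csη, sub_add_cancel]
    · exact sum_nonneg fun e he => mul_nonneg (add_nonneg (hη0 e he) (hη e he)) (hCap e he)
    · exact fun n => by linarith [hbal0 n]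
    · exact fun n => by linarith [hbal1 n]
  · rw [hτu, hτd]
    exact generator_profit_nonneg (mul_pos hq (hσ (bI i))) (hPbar i) (hp i) (hru i) (hrd i)
      (hau i) (had i) (hρ i) (hyu i) (hxu i) (hyd i) (hxd i) (hxx i) (hruL i) (hrdL i)
      (csyu i) (csyd i) (csyy i) (csxx i) (dsp i) (dsru i) (dsrd i) (dsau i) (dsad i)

/-- Theorem 1: revenue adequacy of the chance-constrained pricing scheme.
The hypotheses encode an optimal primal-dual pair of the DCCO linear program via
primal feasibility, dual feasibility, and complementary slackness. -/
theorem cco_pricing_revenue_adequacy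
    {Bus Gen Load : Type*} [Fintype Bus] [Fintype Gen] [Fintype Load] [DecidableEq Bus]
    (bI : Gen → Bus) (bJ : Load → Bus)
    (Lines : Finset (Bus × Bus))
    (Bsus : Bus → Bus → ℝ) (Cap : Bus × Bus → ℝ) (hCap : ∀ e ∈ Lines, 0 ≤ Cap e)
    (C Cu Cd : Gen → ℝ) (Cw : Bus → ℝ) (V : Load → ℝ)
    (Ld : Load → ℝ) (hLd : ∀ j, 0 ≤ Ld j)
    (Pbar Rubar Rdbar : Gen → ℝ)
    (hPbar : ∀ i, 0 ≤ Pbar i) (hRubar : ∀ i, 0 ≤ Rubar i) (hRdbar : ∀ i, 0 ≤ Rdbar i)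
    (Wf Wbar : Bus → ℝ) (hWf : ∀ n, 0 ≤ Wf n) (hWbar : ∀ n, 0 ≤ Wbar n)
    (σ : Bus → ℝ) (hσ : ∀ n, 0 < σ n) (q : ℝ) (hq : 0 < q)
    -- primal variables
    (p ru rd au ad : Gen → ℝ) (wsch wspi β δ0 δ : Bus → ℝ) (s γ : Load → ℝ)
    -- dual variables
    (lam nu kap mu yspi xspi : Bus → ℝ)
    (ρ yu xu yd xd yy xx : Gen → ℝ) (ys xs : Load → ℝ)
    (η0 η : Bus × Bus → ℝ)
    -- primal feasibility: nonnegativity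
    (hp : ∀ i, 0 ≤ p i) (hru : ∀ i, 0 ≤ ru i) (hrd : ∀ i, 0 ≤ rd i)
    (hau : ∀ i, 0 ≤ au i) (had : ∀ i, 0 ≤ ad i)
    (hwsch : ∀ n, 0 ≤ wsch n) (hwspi : ∀ n, 0 ≤ wspi n) (hβ : ∀ n, 0 ≤ β n)
    (hs : ∀ j, 0 ≤ s j) (hγ : ∀ j, 0 ≤ γ j)
    -- primal feasibility: scheduling-stage balance
    (hbal0 : ∀ n, (∑ i ∈ univ.filter (fun i => bI i = n), p i) + wsch n
        - (∑ e ∈ Lines.filter (fun e => e.1 = n), Bsus e.1 e.2 * (δ0 e.1 - δ0 e.2))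
        = ∑ j ∈ univ.filter (fun j => bJ j = n), Ld j)
    -- primal feasibility: real-time balance
    (hbal1 : ∀ n, (∑ i ∈ univ.filter (fun i => bI i = n), (ru i - rd i))
        + (∑ j ∈ univ.filter (fun j => bJ j = n), s j)
        + (Wf n - wsch n - wspi n)
        + (∑ e ∈ Lines.filter (fun e => e.1 = n),
            Bsus e.1 e.2 * (δ0 e.1 - δ e.1 - δ0 e.2 + δ e.2)) = 0)
    -- primal feasibility: participation
    (hpart : ∀ n, (∑ i ∈ univ.filter (fun i => bI i = n), (au i + ad i))
        + (∑ j ∈ univ.filter (fun j => bJ j = n), γ j) + β n = 1)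
    -- primal feasibility: line limits
    (hline0 : ∀ e ∈ Lines, Bsus e.1 e.2 * (δ0 e.1 - δ0 e.2) ≤ Cap e)
    (hline1 : ∀ e ∈ Lines, Bsus e.1 e.2 * (δ e.1 - δ e.2) ≤ Cap e)
    -- primal feasibility: bounds
    (hwschU : ∀ n, wsch n ≤ Wbar n)
    (hpU : ∀ i, p i ≤ Pbar i)
    (hspiL : ∀ n, wspi n - β n * (q * σ n) ≥ 0)
    (hspiU : ∀ n, Wf n - wspi n - (1 - β n) * (q * σ n) ≥ 0)
    (hruL : ∀ i, ru i - au i * (q * σ (bI i)) ≥ 0)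
    (hruU : ∀ i, Rubar i - ru i - au i * (q * σ (bI i)) ≥ 0)
    (hrdL : ∀ i, rd i - ad i * (q * σ (bI i)) ≥ 0)
    (hrdU : ∀ i, Rdbar i - rd i - ad i * (q * σ (bI i)) ≥ 0)
    (hcapL : ∀ i, p i + ru i - rd i - (au i + ad i) * (q * σ (bI i)) ≥ 0)
    (hcapU : ∀ i, Pbar i - p i - ru i + rd i - (au i + ad i) * (q * σ (bI i)) ≥ 0)
    (hsL : ∀ j, s j - γ j * (q * σ (bJ j)) ≥ 0)
    (hsU : ∀ j, Ld j - s j - γ j * (q * σ (bJ j)) ≥ 0)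
    -- dual feasibility: nonnegativity of inequality duals
    (hmu : ∀ n, 0 ≤ mu n) (hρ : ∀ i, 0 ≤ ρ i)
    (hyspi : ∀ n, 0 ≤ yspi n) (hxspi : ∀ n, 0 ≤ xspi n)
    (hyu : ∀ i, 0 ≤ yu i) (hxu : ∀ i, 0 ≤ xu i)
    (hyd : ∀ i, 0 ≤ yd i) (hxd : ∀ i, 0 ≤ xd i)
    (hyy : ∀ i, 0 ≤ yy i) (hxx : ∀ i, 0 ≤ xx i)
    (hys : ∀ j, 0 ≤ ys j) (hxs : ∀ j, 0 ≤ xs j)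
    (hη0 : ∀ e ∈ Lines, 0 ≤ η0 e) (hη : ∀ e ∈ Lines, 0 ≤ η e)
    -- dual feasibility: one dual constraint per primal variable
    (dfp : ∀ i, 0 ≤ C i - lam (bI i) + ρ i - yy i + xx i)
    (dfru : ∀ i, 0 ≤ Cu i - nu (bI i) - yu i + xu i - yy i + xx i)
    (dfrd : ∀ i, 0 ≤ -Cd i + nu (bI i) - yd i + xd i + yy i - xx i)
    (dfau : ∀ i, 0 ≤ -kap (bI i) + (q * σ (bI i)) * (yu i + xu i + yy i + xx i))
    (dfad : ∀ i, 0 ≤ -kap (bI i) + (q * σ (bI i)) * (yd i + xd i + yy i + xx i))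
    (dfwsch : ∀ n, 0 ≤ -lam n + nu n + mu n)
    (dfwspi : ∀ n, 0 ≤ -Cw n + nu n - yspi n + xspi n)
    (dfβ : ∀ n, 0 ≤ -kap n + (q * σ n) * (yspi n - xspi n))
    (dfs : ∀ j, 0 ≤ V j - nu (bJ j) - ys j + xs j)
    (dfγ : ∀ j, 0 ≤ -kap (bJ j) + (q * σ (bJ j)) * (ys j + xs j))
    (dfδ0 : ∀ n, (∑ e ∈ Lines.filter (fun e => e.1 = n),
          Bsus e.1 e.2 * (lam n - nu n + η0 e))
        - (∑ e ∈ Lines.filter (fun e => e.2 = n),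
          Bsus e.1 e.2 * (lam e.1 - nu e.1 + η0 e)) = 0)
    (dfδ : ∀ n, (∑ e ∈ Lines.filter (fun e => e.1 = n), Bsus e.1 e.2 * (nu n + η e))
        - (∑ e ∈ Lines.filter (fun e => e.2 = n), Bsus e.1 e.2 * (nu e.1 + η e)) = 0)
    -- complementary slackness: dual variable times primal slack
    (csρ : ∀ i, ρ i * (Pbar i - p i) = 0)
    (csmu : ∀ n, mu n * (Wbar n - wsch n) = 0)
    (csyspi : ∀ n, yspi n * (wspi n - β n * (q * σ n)) = 0)
    (csxspi : ∀ n, xspi n * (Wf n - wspi n - (1 - β n) * (q * σ n)) = 0)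
    (csyu : ∀ i, yu i * (ru i - au i * (q * σ (bI i))) = 0)
    (csxu : ∀ i, xu i * (Rubar i - ru i - au i * (q * σ (bI i))) = 0)
    (csyd : ∀ i, yd i * (rd i - ad i * (q * σ (bI i))) = 0)
    (csxd : ∀ i, xd i * (Rdbar i - rd i - ad i * (q * σ (bI i))) = 0)
    (csyy : ∀ i, yy i * (p i + ru i - rd i - (au i + ad i) * (q * σ (bI i))) = 0)
    (csxx : ∀ i, xx i * (Pbar i - p i - ru i + rd i - (au i + ad i) * (q * σ (bI i))) = 0)
    (csys : ∀ j, ys j * (s j - γ j * (q * σ (bJ j))) = 0)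
    (csxs : ∀ j, xs j * (Ld j - s j - γ j * (q * σ (bJ j))) = 0)
    (csη0 : ∀ e ∈ Lines, η0 e * (Cap e - Bsus e.1 e.2 * (δ0 e.1 - δ0 e.2)) = 0)
    (csη : ∀ e ∈ Lines, η e * (Cap e - Bsus e.1 e.2 * (δ e.1 - δ e.2)) = 0)
    -- complementary slackness: primal variable times dual slack
    (dsp : ∀ i, p i * (C i - lam (bI i) + ρ i - yy i + xx i) = 0)
    (dsru : ∀ i, ru i * (Cu i - nu (bI i) - yu i + xu i - yy i + xx i) = 0)
    (dsrd : ∀ i, rd i * (-Cd i + nu (bI i) - yd i + xd i + yy i - xx i) = 0)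
    (dsau : ∀ i, au i * (-kap (bI i) + (q * σ (bI i)) * (yu i + xu i + yy i + xx i)) = 0)
    (dsad : ∀ i, ad i * (-kap (bI i) + (q * σ (bI i)) * (yd i + xd i + yy i + xx i)) = 0)
    (dswsch : ∀ n, wsch n * (-lam n + nu n + mu n) = 0)
    (dswspi : ∀ n, wspi n * (-Cw n + nu n - yspi n + xspi n) = 0)
    (dsβ : ∀ n, β n * (-kap n + (q * σ n) * (yspi n - xspi n)) = 0)
    (dss : ∀ j, s j * (V j - nu (bJ j) - ys j + xs j) = 0)
    (dsγ : ∀ j, γ j * (-kap (bJ j) + (q * σ (bJ j)) * (ys j + xs j)) = 0)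
    -- positive net scheduled consumption (Assumption 1(ii))
    (hdem : 0 < ∑ j : Load, (Ld j - s j))
    -- reserve price adders and load surcharge of the pricing scheme
    (τu τd : Gen → ℝ)
    (hτu : ∀ i, τu i = if 0 ≤ kap (bI i) - (q * σ (bI i)) * yu i
        then kap (bI i) / (q * σ (bI i)) else yu i)
    (hτd : ∀ i, τd i = if 0 ≤ kap (bI i) - (q * σ (bI i)) * yd i
        then kap (bI i) / (q * σ (bI i)) else yd i)
    (ζ : ℝ)
    (hζ : ζ = (∑ n : Bus, ((∑ i ∈ univ.filter (fun i => bI i = n), (τu i * ru i + τd i * rd i))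
          - (yspi n - xspi n) * (Wf n - wspi n)))
        / (∑ j : Load, (Ld j - s j))) :
    -- (i) revenue adequacy in expectation of the market administrator
    (0 ≤ (∑ n : Bus, lam n * ((∑ j ∈ univ.filter (fun j => bJ j = n), Ld j)
            - (∑ i ∈ univ.filter (fun i => bI i = n), p i) - wsch n))
        - (∑ n : Bus, nu n * ((∑ i ∈ univ.filter (fun i => bI i = n), (ru i - rd i))
            + (∑ j ∈ univ.filter (fun j => bJ j = n), s j) + Wf n - wsch n - wspi n))
        - (∑ n : Bus, ((∑ i ∈ univ.filter (fun i => bI i = n), (τu i * ru i + τd i * rd i))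
            - (yspi n - xspi n) * (Wf n - wspi n)))
        + ζ * (∑ j : Load, (Ld j - s j)))
    -- (ii) cost recovery in expectation of every VRES generator
    ∧ (∀ n : Bus, 0 ≤ (lam n - nu n) * wsch n
        + (Cw n - nu n + yspi n - xspi n) * wspi n
        + (nu n - yspi n + xspi n - Cw n) * Wf n)
    -- (iii) cost recovery in expectation of every conventional generator
    ∧ (∀ i : Gen, 0 ≤ (lam (bI i) - C i) * p i + (nu (bI i) - Cu i) * ru i
        + (Cd i - nu (bI i)) * rd i + τu i * ru i + τd i * rd i) :=
  cco_pricing_revenue_adequacy_general bI bJ Lines Bsus Cap hCap C Cu Cd Cw Ld Pbar hPbar Wf hWf σ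
    hσ q hq p ru rd au ad wsch wspi δ0 δ s lam nu kap mu yspi xspi ρ yu xu yd xd yy xx η0 η hp hru
    hrd hau had hwsch hbal0 hbal1 hruL hrdL hmu hρ hyu hxu hyd hxd hxx hη0 hη dfwspi dfδ0 dfδ csyu
    csyd csyy csxx csη0 csη dsp dsru dsrd dsau dsad dswsch dswspi hdem τu τd hτu hτd ζ hζ
end

section
/- Revenue adequacy of the market administrator (Section 4.1). Let 𝓑, 𝓘, 𝓙, 𝓛 and location maps b be as in the setup, with susceptances B_{nl} and line capacities C̄_{kl} ≥ 0 for (k,l)∈𝓛, loads L_j, and forecasts W_n^f. Let λ_n, ν_n, a_n (n∈𝓑), t_i^u, t_i^d (i∈𝓘) be real numbers, and let p_i, r_i^u, r_i^d, w_n^{sch}, w_n^{spi}, s_j, δ_n^0, δ_n be real numbers satisfying, for every n∈𝓑, the scheduling balance Σ_{i∈𝓘_n} p_i + w_n^{sch} − Σ_{(n,l)∈𝓛} B_{nl}(δ_n^0 − δ_l^0) = Σ_{j∈𝓙_n} L_j and the real-time balance Σ_{i∈𝓘_n}(r_i^u − r_i^d) + Σ_{j∈𝓙_n} s_j + (W_n^f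 − w_n^{sch} − w_n^{spi}) + Σ_{(n,l)∈𝓛} B_{nl}(δ_n^0 − δ_n − δ_l^0 + δ_l) = 0. Assume Σ_{j∈𝓙}(L_j − s_j) > 0 and define ζ := [Σ_{n∈𝓑}(Σ_{i∈𝓘_n}(t_i^u r_i^u + t_i^d r_i^d) − a_n(W_n^f − w_n^{spi}))]/[Σ_{j∈𝓙}(L_j − s_j)]. Suppose further that the pair (δ^0, δ) minimizes the linear function g(θ^0, θ) := Σ_{n∈𝓑}[λ_n Σ_{(n,l)∈𝓛} B_{nl}(θ_n^0 − θ_l^0) − ν_n Σ_{(n,l)∈𝓛} B_{nl}(θ_n^0 − θ_n − θ_l^0 + θ_l)] over all (θ^0, θ) ∈ ℝ^𝓑 × ℝ^𝓑 satisfying B_{kl}(θ_k^0 − θ_l^0) ≤ C̄_{kl} and B_{kl}(θ_k − θ_l) ≤ C̄_{kl} for all (k,l)∈𝓛. Then the market administrator's expected profit is nonnegative: Γ^o := Σ_{n∈𝓑} λ_n(Σ_{j∈𝓙_n} L_j − Σ_{i∈𝓘_n} p_i − w_n^{sch}) − Σ_{n∈𝓑} ν_n(Σ_{i∈𝓘_n}(r_i^u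 − r_i^d) + Σ_{j∈𝓙_n} s_j + W_n^f − w_n^{sch} − w_n^{spi}) − Σ_{n∈𝓑}(Σ_{i∈𝓘_n}(t_i^u r_i^u + t_i^d r_i^d) − a_n(W_n^f − w_n^{spi})) + ζ·Σ_{j∈𝓙}(L_j − s_j) ≥ 0. -/
/-!
Testing the optimality of `(δ0, δ)` against the zero angles, which are feasible because the
capacities are nonnegative, gives `g(δ0, δ) ≤ 0`. By the two nodal balance equations the energy
and balancing revenue equals `-g(δ0, δ)`, and `ζ` is chosen so that the load surcharge exactly
recovers the reserve and spill payments.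
-/

open Finset

theorem sum_mul_sub_sum_mul_nonneg_of_add_eq_zero {ι R : Type*} [CommRing R] [LinearOrder R]
    [IsStrictOrderedRing R] (s : Finset ι) (lam nu x y F G : ι → R)
    (hx : ∀ n ∈ s, x n + F n = 0) (hy : ∀ n ∈ s, y n + G n = 0)
    (hFG : ∑ n ∈ s, (lam n * F n - nu n * G n) ≤ 0) :
    0 ≤ ∑ n ∈ s, lam n * x n - ∑ n ∈ s, nu n * y n := by
  have hsum : ∑ n ∈ s, lam n * x n - ∑ n ∈ s, nu n * y n
      = -∑ n ∈ s, (lam n * F n - nu n * G n) := by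
    rw [← sum_sub_distrib, ← sum_neg_distrib]
    refine sum_congr rfl fun n hn => ?_
    rw [eq_neg_of_add_eq_zero_left (hx n hn), eq_neg_of_add_eq_zero_left (hy n hn)]
    ring
  rw [hsum]
  exact neg_nonneg.mpr hFG

theorem market_administrator_revenue_adequacy_general
    {Bus Gen Load : Type*} [Fintype Bus] [Fintype Gen] [Fintype Load] [DecidableEq Bus]
    (bI : Gen → Bus) (bJ : Load → Bus)
    (Lines : Finset (Bus × Bus))
    (Bsus : Bus → Bus → ℝ) (Cap : Bus × Bus → ℝ) (hCap : ∀ e ∈ Lines, 0 ≤ Cap e)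
    (Ld : Load → ℝ) (Wf : Bus → ℝ)
    (lam nu a : Bus → ℝ) (tu td : Gen → ℝ)
    (p ru rd : Gen → ℝ) (wsch wspi : Bus → ℝ) (s : Load → ℝ)
    (δ0 δ : Bus → ℝ)
    -- scheduling-stage power balance at every bus
    (hbal0 : ∀ n : Bus,
      (∑ i ∈ univ.filter (fun i => bI i = n), p i) + wsch n
        - (∑ e ∈ Lines.filter (fun e => e.1 = n), Bsus e.1 e.2 * (δ0 e.1 - δ0 e.2))
        = ∑ j ∈ univ.filter (fun j => bJ j = n), Ld j)
    -- real-time power balance at every bus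
    (hbal1 : ∀ n : Bus,
      (∑ i ∈ univ.filter (fun i => bI i = n), (ru i - rd i))
        + (∑ j ∈ univ.filter (fun j => bJ j = n), s j)
        + (Wf n - wsch n - wspi n)
        + (∑ e ∈ Lines.filter (fun e => e.1 = n),
            Bsus e.1 e.2 * (δ0 e.1 - δ e.1 - δ0 e.2 + δ e.2)) = 0)
    -- positive net scheduled consumption
    (hdem : 0 < ∑ j : Load, (Ld j - s j))
    -- the load surcharge ζ
    (ζ : ℝ)
    (hζ : ζ = (∑ n : Bus, ((∑ i ∈ univ.filter (fun i => bI i = n), (tu i * ru i + td i * rd i))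
          - a n * (Wf n - wspi n)))
        / (∑ j : Load, (Ld j - s j)))
    (hmin : ∀ θ0 θ : Bus → ℝ,
      (∀ e ∈ Lines, Bsus e.1 e.2 * (θ0 e.1 - θ0 e.2) ≤ Cap e) →
      (∀ e ∈ Lines, Bsus e.1 e.2 * (θ e.1 - θ e.2) ≤ Cap e) →
      (∑ n : Bus, (lam n * (∑ e ∈ Lines.filter (fun e => e.1 = n),
            Bsus e.1 e.2 * (δ0 e.1 - δ0 e.2))
          - nu n * (∑ e ∈ Lines.filter (fun e => e.1 = n),
            Bsus e.1 e.2 * (δ0 e.1 - δ e.1 - δ0 e.2 + δ e.2))))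
        ≤ ∑ n : Bus, (lam n * (∑ e ∈ Lines.filter (fun e => e.1 = n),
            Bsus e.1 e.2 * (θ0 e.1 - θ0 e.2))
          - nu n * (∑ e ∈ Lines.filter (fun e => e.1 = n),
            Bsus e.1 e.2 * (θ0 e.1 - θ e.1 - θ0 e.2 + θ e.2)))) :
    -- the market administrator's expected profit is nonnegative
    0 ≤ (∑ n : Bus, lam n * ((∑ j ∈ univ.filter (fun j => bJ j = n), Ld j)
          - (∑ i ∈ univ.filter (fun i => bI i = n), p i) - wsch n))
      - (∑ n : Bus, nu n * ((∑ i ∈ univ.filter (fun i => bI i = n), (ru i - rd i))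
          + (∑ j ∈ univ.filter (fun j => bJ j = n), s j) + Wf n - wsch n - wspi n))
      - (∑ n : Bus, ((∑ i ∈ univ.filter (fun i => bI i = n), (tu i * ru i + td i * rd i))
          - a n * (Wf n - wspi n)))
      + ζ * (∑ j : Load, (Ld j - s j)) := by
  rw [hζ, div_mul_cancel₀ _ hdem.ne', sub_add_cancel]
  have hzero_feasible :
      ∀ e ∈ Lines, Bsus e.1 e.2 * ((0 : Bus → ℝ) e.1 - (0 : Bus → ℝ) e.2) ≤ Cap e :=
    fun e he => by simpa using hCap e he
  have hopt := hmin 0 0 hzero_feasible hzero_feasible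
  simp only [Pi.zero_apply, sub_zero, mul_zero, add_zero, sum_const_zero] at hopt
  refine sum_mul_sub_sum_mul_nonneg_of_add_eq_zero univ lam nu _ _ _ _
    (fun n _ => ?_) (fun n _ => ?_) hopt
  · linarith [hbal0 n]
  · linarith [hbal1 n]

/-- Revenue adequacy of the market administrator (Section 4.1 of the paper). -/
theorem market_administrator_revenue_adequacy
    {Bus Gen Load : Type*} [Fintype Bus] [Fintype Gen] [Fintype Load] [DecidableEq Bus]
    (bI : Gen → Bus) (bJ : Load → Bus)
    (Lines : Finset (Bus × Bus))
    (Bsus : Bus → Bus → ℝ) (Cap : Bus × Bus → ℝ) (hCap : ∀ e ∈ Lines, 0 ≤ Cap e)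
    (Ld : Load → ℝ) (Wf : Bus → ℝ)
    (lam nu a : Bus → ℝ) (tu td : Gen → ℝ)
    (p ru rd : Gen → ℝ) (wsch wspi : Bus → ℝ) (s : Load → ℝ)
    (δ0 δ : Bus → ℝ)
    -- scheduling-stage power balance at every bus
    (hbal0 : ∀ n : Bus,
      (∑ i ∈ univ.filter (fun i => bI i = n), p i) + wsch n
        - (∑ e ∈ Lines.filter (fun e => e.1 = n), Bsus e.1 e.2 * (δ0 e.1 - δ0 e.2))
        = ∑ j ∈ univ.filter (fun j => bJ j = n), Ld j)
    -- real-time power balance at every bus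
    (hbal1 : ∀ n : Bus,
      (∑ i ∈ univ.filter (fun i => bI i = n), (ru i - rd i))
        + (∑ j ∈ univ.filter (fun j => bJ j = n), s j)
        + (Wf n - wsch n - wspi n)
        + (∑ e ∈ Lines.filter (fun e => e.1 = n),
            Bsus e.1 e.2 * (δ0 e.1 - δ e.1 - δ0 e.2 + δ e.2)) = 0)
    -- positive net scheduled consumption
    (hdem : 0 < ∑ j : Load, (Ld j - s j))
    -- the load surcharge ζ
    (ζ : ℝ)
    (hζ : ζ = (∑ n : Bus, ((∑ i ∈ univ.filter (fun i => bI i = n), (tu i * ru i + td i * rd i))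
          - a n * (Wf n - wspi n)))
        / (∑ j : Load, (Ld j - s j)))
    -- (δ0, δ) is feasible for the line limits and minimizes the angle subproblem g
    (hfeas0 : ∀ e ∈ Lines, Bsus e.1 e.2 * (δ0 e.1 - δ0 e.2) ≤ Cap e)
    (hfeas1 : ∀ e ∈ Lines, Bsus e.1 e.2 * (δ e.1 - δ e.2) ≤ Cap e)
    (hmin : ∀ θ0 θ : Bus → ℝ,
      (∀ e ∈ Lines, Bsus e.1 e.2 * (θ0 e.1 - θ0 e.2) ≤ Cap e) →
      (∀ e ∈ Lines, Bsus e.1 e.2 * (θ e.1 - θ e.2) ≤ Cap e) →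
      (∑ n : Bus, (lam n * (∑ e ∈ Lines.filter (fun e => e.1 = n),
            Bsus e.1 e.2 * (δ0 e.1 - δ0 e.2))
          - nu n * (∑ e ∈ Lines.filter (fun e => e.1 = n),
            Bsus e.1 e.2 * (δ0 e.1 - δ e.1 - δ0 e.2 + δ e.2))))
        ≤ ∑ n : Bus, (lam n * (∑ e ∈ Lines.filter (fun e => e.1 = n),
            Bsus e.1 e.2 * (θ0 e.1 - θ0 e.2))
          - nu n * (∑ e ∈ Lines.filter (fun e => e.1 = n),
            Bsus e.1 e.2 * (θ0 e.1 - θ e.1 - θ0 e.2 + θ e.2)))) :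
    -- the market administrator's expected profit is nonnegative
    0 ≤ (∑ n : Bus, lam n * ((∑ j ∈ univ.filter (fun j => bJ j = n), Ld j)
          - (∑ i ∈ univ.filter (fun i => bI i = n), p i) - wsch n))
      - (∑ n : Bus, nu n * ((∑ i ∈ univ.filter (fun i => bI i = n), (ru i - rd i))
          + (∑ j ∈ univ.filter (fun j => bJ j = n), s j) + Wf n - wsch n - wspi n))
      - (∑ n : Bus, ((∑ i ∈ univ.filter (fun i => bI i = n), (tu i * ru i + td i * rd i))
          - a n * (Wf n - wspi n)))
      + ζ * (∑ j : Load, (Ld j - s j)) :=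
  market_administrator_revenue_adequacy_general bI bJ Lines Bsus Cap hCap Ld Wf lam nu a tu td p ru
    rd wsch wspi s δ0 δ hbal0 hbal1 hdem ζ hζ hmin
end

section
/- Cost recovery of VRES generators (Section 4.2). Let λ, ν, y, x, μ, C^w, w^{sch}, w^{spi}, W^f be real numbers with μ ≥ 0, w^{sch} ≥ 0 and W^f ≥ 0, satisfying the complementary slackness conditions w^{sch}·(−λ + ν + μ) = 0 and w^{spi}·(−C^w + ν − y + x) = 0, and the dual feasibility condition −C^w + ν − y + x ≥ 0. Then the VRES generator's expected profit satisfies Γ^w := (λ − ν)·w^{sch} + (C^w − ν + y − x)·w^{spi} + (ν − y + x − C^w)·W^f = μ·w^{sch} + (−C^w + ν − y + x)·W^f ≥ 0. -/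
/-- Cost recovery of VRES generators (Section 4.2 of the paper). -/
theorem vres_cost_recovery
    (lam nu y x mu Cw wsch wspi Wf : ℝ)
    (hmu : 0 ≤ mu) (hwsch : 0 ≤ wsch) (hWf : 0 ≤ Wf)
    (hcs1 : wsch * (-lam + nu + mu) = 0)
    (hcs2 : wspi * (-Cw + nu - y + x) = 0)
    (hdual : -Cw + nu - y + x ≥ 0) :
    (lam - nu) * wsch + (Cw - nu + y - x) * wspi + (nu - y + x - Cw) * Wf
      = mu * wsch + (-Cw + nu - y + x) * Wf
    ∧ (lam - nu) * wsch + (Cw - nu + y - x) * wspi + (nu - y + x - Cw) * Wf ≥ 0 := by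
  have profit_eq : (lam - nu) * wsch + (Cw - nu + y - x) * wspi + (nu - y + x - Cw) * Wf
      = mu * wsch + (-Cw + nu - y + x) * Wf := by
    linear_combination -hcs1 - hcs2
  refine ⟨profit_eq, ?_⟩
  rw [profit_eq]
  exact add_nonneg (mul_nonneg hmu hwsch) (mul_nonneg hdual hWf)
end

section
/- Cost recovery of conventional generators (Section 4.3). Let σ' > 0 and let C, C^u, C^d, λ, ν, κ be real numbers. Let p, r^u, r^d, α^u, α^d ≥ 0 satisfy r^u ≥ σ'·α^u and r^d ≥ σ'·α^d, let P̄, R̄^u, R̄^d ≥ 0, and let ρ, x, y, y^u, x^u, y^d, x^d ≥ 0. Assume the primal complementary slackness conditions: (p − P̄)·ρ = 0; (r^u + α^u·σ' − R̄^u)·x^u = 0; (r^d + α^d·σ' − R̄^d)·x^d = 0; (p + r^u − r^d − (α^u + α^d)·σ')·y = 0; (P̄ − p − r^u + r^d − (α^u + α^d)·σ')·x = 0; and the dual complementary slackness conditions: p·(C − λ + ρ − y + x) = 0; r^u·(C^u − ν − y^u + x^u − y + x) = 0; r^d·(−C^d + ν − y^d + x^d + y − x) = 0; α^u·(−κ +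 σ'·(y^u + x^u + y + x)) = 0; α^d·(−κ + σ'·(y^d + x^d + y + x)) = 0. Define τ^u := κ/σ' if κ − σ'·y^u ≥ 0 and τ^u := y^u otherwise; define τ^d := κ/σ' if κ − σ'·y^d ≥ 0 and τ^d := y^d otherwise. Then the generator's expected profit is nonnegative: Γ^g := (λ − C)·p + (ν − C^u)·r^u + (C^d − ν)·r^d + τ^u·r^u + τ^d·r^d ≥ 0. -/
/-!
Substituting the complementary-slackness equalities of the dual constraints and of the two
real-time capacity constraints, the profit splits as `p ρ + P̄ x + (r^u + σ' α^u) x^u + (r^d + σ' α^d) x^d` plus, for each reserve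
direction, a margin `(τ - y) r - α (κ - σ' y)`. Every summand is nonnegative; for the margins this
is exactly what the choice of `τ` guarantees.
-/

lemma reserve_price_margin_nonneg {σ κ y r α : ℝ} (hσ : 0 < σ) (hα : 0 ≤ α) (hr : σ * α ≤ r) :
    0 ≤ ((if 0 ≤ κ - σ * y then κ / σ else y) - y) * r - α * (κ - σ * y) := by
  split_ifs with hκ
  · have hτ : 0 ≤ κ / σ - y := by
      rw [div_sub' hσ.ne']
      exact div_nonneg hκ hσ.le
    calc (0 : ℝ) ≤ (κ / σ - y) * (r - σ * α) := mul_nonneg hτ (by linarith)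
      _ = (κ / σ - y) * r - α * (κ - σ * y) := by field_simp
  · rw [sub_self, zero_mul, zero_sub, ← mul_neg]
    exact mul_nonneg hα (neg_nonneg.mpr (not_le.mp hκ).le)

theorem conventional_generator_cost_recovery_general
    (σ' C Cu Cd lam nu kap : ℝ) (hσ' : 0 < σ')
    (p ru rd au ad : ℝ)
    (hp : 0 ≤ p) (hru : 0 ≤ ru) (hrd : 0 ≤ rd) (hau : 0 ≤ au) (had : 0 ≤ ad)
    (hruL : ru ≥ σ' * au) (hrdL : rd ≥ σ' * ad)
    (Pbar : ℝ) (hPbar : 0 ≤ Pbar)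
    (ρ x y yu xu yd xd : ℝ)
    (hρ : 0 ≤ ρ) (hx : 0 ≤ x) (hxu : 0 ≤ xu) (hxd : 0 ≤ xd)
    (pc4 : (p + ru - rd - (au + ad) * σ') * y = 0)
    (pc5 : (Pbar - p - ru + rd - (au + ad) * σ') * x = 0)
    (dc1 : p * (C - lam + ρ - y + x) = 0)
    (dc2 : ru * (Cu - nu - yu + xu - y + x) = 0)
    (dc3 : rd * (-Cd + nu - yd + xd + y - x) = 0)
    (dc4 : au * (-kap + σ' * (yu + xu + y + x)) = 0)
    (dc5 : ad * (-kap + σ' * (yd + xd + y + x)) = 0) :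
    (lam - C) * p + (nu - Cu) * ru + (Cd - nu) * rd
      + (if 0 ≤ kap - σ' * yu then kap / σ' else yu) * ru
      + (if 0 ≤ kap - σ' * yd then kap / σ' else yd) * rd ≥ 0 := by
  have margin_u := reserve_price_margin_nonneg (κ := kap) (y := yu) hσ' hau hruL
  have margin_d := reserve_price_margin_nonneg (κ := kap) (y := yd) hσ' had hrdL
  have hprofit : (lam - C) * p + (nu - Cu) * ru + (Cd - nu) * rd
      + (if 0 ≤ kap - σ' * yu then kap / σ' else yu) * ru
      + (if 0 ≤ kap - σ' * yd then kap / σ' else yd) * rd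
      = p * ρ + Pbar * x + (ru + σ' * au) * xu + (rd + σ' * ad) * xd
        + (((if 0 ≤ kap - σ' * yu then kap / σ' else yu) - yu) * ru - au * (kap - σ' * yu))
        + (((if 0 ≤ kap - σ' * yd then kap / σ' else yd) - yd) * rd - ad * (kap - σ' * yd)) := by
    linear_combination -dc1 - dc2 - dc3 - pc4 - pc5 - dc4 - dc5
  have hσau : 0 ≤ σ' * au := mul_nonneg hσ'.le hau
  have hσad : 0 ≤ σ' * ad := mul_nonneg hσ'.le had
  rw [hprofit]
  linarith [mul_nonneg hp hρ, mul_nonneg hPbar hx, mul_nonneg (add_nonneg hru hσau) hxu,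
    mul_nonneg (add_nonneg hrd hσad) hxd]

/-- Cost recovery of conventional generators (Section 4.3 of the paper). -/
theorem conventional_generator_cost_recovery
    (σ' C Cu Cd lam nu kap : ℝ) (hσ' : 0 < σ')
    (p ru rd au ad : ℝ)
    (hp : 0 ≤ p) (hru : 0 ≤ ru) (hrd : 0 ≤ rd) (hau : 0 ≤ au) (had : 0 ≤ ad)
    (hruL : ru ≥ σ' * au) (hrdL : rd ≥ σ' * ad)
    (Pbar Rubar Rdbar : ℝ) (hPbar : 0 ≤ Pbar) (hRubar : 0 ≤ Rubar) (hRdbar : 0 ≤ Rdbar)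
    (ρ x y yu xu yd xd : ℝ)
    (hρ : 0 ≤ ρ) (hx : 0 ≤ x) (hy : 0 ≤ y) (hyu : 0 ≤ yu) (hxu : 0 ≤ xu)
    (hyd : 0 ≤ yd) (hxd : 0 ≤ xd)
    (pc1 : (p - Pbar) * ρ = 0)
    (pc2 : (ru + au * σ' - Rubar) * xu = 0)
    (pc3 : (rd + ad * σ' - Rdbar) * xd = 0)
    (pc4 : (p + ru - rd - (au + ad) * σ') * y = 0)
    (pc5 : (Pbar - p - ru + rd - (au + ad) * σ') * x = 0)
    (dc1 : p * (C - lam + ρ - y + x) = 0)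
    (dc2 : ru * (Cu - nu - yu + xu - y + x) = 0)
    (dc3 : rd * (-Cd + nu - yd + xd + y - x) = 0)
    (dc4 : au * (-kap + σ' * (yu + xu + y + x)) = 0)
    (dc5 : ad * (-kap + σ' * (yd + xd + y + x)) = 0) :
    (lam - C) * p + (nu - Cu) * ru + (Cd - nu) * rd
      + (if 0 ≤ kap - σ' * yu then kap / σ' else yu) * ru
      + (if 0 ≤ kap - σ' * yd then kap / σ' else yd) * rd ≥ 0 :=
  conventional_generator_cost_recovery_general σ' C Cu Cd lam nu kap hσ' p ru rd au ad hp hru hrd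
    hau had hruL hrdL Pbar hPbar ρ x y yu xu yd xd hρ hx hxu hxd pc4 pc5 dc1 dc2 dc3 dc4 dc5
end

section
/- Theorem 2 (revenue adequacy of the stochastic pricing scheme of Morales et al.). Let (p_i, w_n^{sch}, δ_n^0, r_i^{uω}, r_i^{dω}, s_j^ω, w_n^{spi,ω}, δ_n^ω) be an optimal solution of the SO linear program and let (λ_n, ν_n^ω) be the components of an optimal solution of its linear programming dual corresponding to the scheduling and per-scenario real-time balance constraints (equivalently, primal and dual satisfy primal feasibility, dual feasibility and complementary slackness). Then under the stochastic pricing scheme: (i) Γ̂^o := −Σ_{n∈𝓑} λ_n(Σ_{i∈𝓘_n} p_i + w_n^{sch} − Σ_{j∈𝓙_n} L_j) − Σ_{n∈𝓑} Σ_{ω∈Ω} ν_n^ω·A_n^ω ≥ 0, where A_n^ω := Σ_{i∈𝓘_n}(r_i^{uω} − r_i^{dω}) − (w_n^{spi,ω} + w_n^{sch} − W_n^ω) + Σ_{j∈𝓙_n} s_j^ω; (ii) for every n∈𝓑, Γ̂^{w_n} := λ_n·w_n^{sch} + Σ_{ω∈Ω} π^ω·B_n^ω ≥ 0, where B_n^ω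 := (ν_n^ω/π^ω)(W_n^ω − w_n^{sch} − w_n^{spi,ω}) − C_n^w(W_n^ω − w_n^{spi,ω}); (iii) for every i∈𝓘, Γ̂^{g_i} := (λ_{b(i)} − C_i)·p_i + Σ_{ω∈Ω} π^ω·D_i^ω ≥ 0, where D_i^ω := (ν_{b(i)}^ω/π^ω − C_i^u)·r_i^{uω} − (ν_{b(i)}^ω/π^ω − C_i^d)·r_i^{dω}. -/
/-!
Every expected profit is rewritten, using complementary slackness, as a sum of products of
nonnegative dual variables with nonnegative primal quantities. For the market administrator the
balance constraints turn the nodal payments into values of DC line flows priced at the nodal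
prices; the dual constraints of the voltage angles say that these prices, corrected by the line
duals `η`, define flows conserved at every bus, which have value zero against any potential
difference. What remains of the merchandising surplus is the congestion rent `∑ η e * Cap e ≥ 0`.
-/

open Finset

section Fiberwise
variable {ι κ M R : Type*} [DecidableEq κ]

theorem sum_filter_eq_congr [AddCommMonoid M] (s : Finset ι) (g : ι → κ) (k : κ)
    (f : κ → ι → M) :
    ∑ i ∈ s with g i = k, f k i = ∑ i ∈ s with g i = k, f (g i) i :=
  sum_congr rfl fun i hi => by rw [(mem_filter.mp hi).2]

theorem sum_mul_sum_fiber [NonUnitalNonAssocSemiring R] [Fintype κ] (s : Finset ι) (g : ι → κ)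
    (h : κ → R) (f : ι → R) :
    ∑ k, h k * ∑ i ∈ s with g i = k, f i = ∑ i ∈ s, h (g i) * f i := by
  simp_rw [mul_sum, sum_filter_eq_congr s g _ fun k i => h k * f i]
  exact sum_fiberwise s g _

theorem sum_sub_mul_eq_zero_of_outflow_eq_inflow [NonUnitalNonAssocRing R] [Fintype κ]
    (s : Finset ι) (src tgt : ι → κ) (δ : κ → R) {f : ι → R}
    (hf : ∀ k, ∑ i ∈ s with src i = k, f i = ∑ i ∈ s with tgt i = k, f i) :
    ∑ i ∈ s, (δ (src i) - δ (tgt i)) * f i = 0 := by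
  simp only [sub_mul, sum_sub_distrib]
  rw [← sum_mul_sum_fiber s src, ← sum_mul_sum_fiber s tgt, ← sum_sub_distrib]
  exact sum_eq_zero fun k _ => by rw [hf, sub_self]

end Fiberwise

section DCNetwork
variable {Bus : Type*} (Lines : Finset (Bus × Bus)) (Bsus : Bus → Bus → ℝ)

def flowValue (c : Bus × Bus → ℝ) (δ : Bus → ℝ) : ℝ :=
  ∑ e ∈ Lines, c e * (Bsus e.1 e.2 * (δ e.1 - δ e.2))

variable {Lines Bsus}

theorem flowValue_add (c d : Bus × Bus → ℝ) (δ : Bus → ℝ) :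
    flowValue Lines Bsus (fun e => c e + d e) δ
      = flowValue Lines Bsus c δ + flowValue Lines Bsus d δ := by
  simp only [flowValue, add_mul, sum_add_distrib]

theorem flowValue_sub (c d : Bus × Bus → ℝ) (δ : Bus → ℝ) :
    flowValue Lines Bsus (fun e => c e - d e) δ
      = flowValue Lines Bsus c δ - flowValue Lines Bsus d δ := by
  simp only [flowValue, sub_mul, sum_sub_distrib]

theorem flowValue_sum {Scen : Type*} [Fintype Scen] (c : Bus × Bus → Scen → ℝ) (δ : Bus → ℝ) :
    flowValue Lines Bsus (fun e => ∑ ω, c e ω) δ = ∑ ω, flowValue Lines Bsus (c · ω) δ := by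
  simp only [flowValue, sum_mul]
  exact sum_comm

theorem flowValue_sub_potential (c : Bus × Bus → ℝ) (δ δ' : Bus → ℝ) :
    flowValue Lines Bsus c (fun n => δ n - δ' n)
      = flowValue Lines Bsus c δ - flowValue Lines Bsus c δ' := by
  simp only [flowValue, ← sum_sub_distrib]
  exact sum_congr rfl fun e _ => by ring

theorem sum_mul_eq_flowValue [Fintype Bus] [DecidableEq Bus] {q : Bus → ℝ} {δ : Bus → ℝ}
    (hq : ∀ n, q n = ∑ e ∈ Lines with e.1 = n, Bsus e.1 e.2 * (δ e.1 - δ e.2)) (h : Bus → ℝ) :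
    ∑ n, h n * q n = flowValue Lines Bsus (fun e => h e.1) δ := by
  simp_rw [hq]
  exact sum_mul_sum_fiber Lines Prod.fst h _

theorem flowValue_eq_zero [Fintype Bus] [DecidableEq Bus] {c : Bus × Bus → ℝ}
    (hc : ∀ n, ∑ e ∈ Lines with e.1 = n, Bsus e.1 e.2 * c e
      = ∑ e ∈ Lines with e.2 = n, Bsus e.1 e.2 * c e) (δ : Bus → ℝ) :
    flowValue Lines Bsus c δ = 0 := by
  rw [← sum_sub_mul_eq_zero_of_outflow_eq_inflow Lines Prod.fst Prod.snd δ hc, flowValue]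
  exact sum_congr rfl fun e _ => by ring

theorem flowValue_nonneg {Cap c : Bus × Bus → ℝ} {δ : Bus → ℝ} (hCap : ∀ e ∈ Lines, 0 ≤ Cap e)
    (hc : ∀ e ∈ Lines, 0 ≤ c e)
    (hcs : ∀ e ∈ Lines, c e * (Cap e - Bsus e.1 e.2 * (δ e.1 - δ e.2)) = 0) :
    0 ≤ flowValue Lines Bsus c δ :=
  sum_nonneg fun e he => calc
    0 ≤ c e * Cap e := mul_nonneg (hc e he) (hCap e he)
    _ = _ := by linear_combination hcs e he

theorem merchandising_surplus_eq_congestion_rent {Scen : Type*} [Fintype Bus] [Fintype Scen]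
    [DecidableEq Bus] {δ0 : Bus → ℝ} {δw : Bus → Scen → ℝ} {lam : Bus → ℝ} {nu : Bus → Scen → ℝ}
    {η0 : Bus × Bus → ℝ} {η : Bus × Bus → Scen → ℝ} {q0 : Bus → ℝ} {q : Bus → Scen → ℝ}
    (hq0 : ∀ n, q0 n = ∑ e ∈ Lines with e.1 = n, Bsus e.1 e.2 * (δ0 e.1 - δ0 e.2))
    (hq : ∀ n ω, q n ω + ∑ e ∈ Lines with e.1 = n,
        Bsus e.1 e.2 * (δ0 e.1 - δw e.1 ω - δ0 e.2 + δw e.2 ω) = 0)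
    (hdual0 : ∀ n, ∑ e ∈ Lines with e.1 = n, Bsus e.1 e.2 * (lam n - ∑ ω, nu n ω + η0 e)
        - ∑ e ∈ Lines with e.2 = n, Bsus e.1 e.2 * (lam e.1 - ∑ ω, nu e.1 ω + η0 e) = 0)
    (hdual : ∀ n ω, ∑ e ∈ Lines with e.1 = n, Bsus e.1 e.2 * (nu n ω + η e ω)
        - ∑ e ∈ Lines with e.2 = n, Bsus e.1 e.2 * (nu e.1 ω + η e ω) = 0) :
    -∑ n, lam n * q0 n - ∑ n, ∑ ω, nu n ω * q n ω
      = flowValue Lines Bsus η0 δ0 + ∑ ω, flowValue Lines Bsus (η · ω) (δw · ω) := by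
  have hsched := sum_mul_eq_flowValue hq0 lam
  have hrt ω := sum_mul_eq_flowValue (q := (q · ω)) (δ := fun n => δw n ω - δ0 n) (fun n => by
    rw [eq_neg_of_add_eq_zero_left (hq n ω), ← sum_neg_distrib]
    exact sum_congr rfl fun e _ => by ring) (nu · ω)
  have hrent0 := flowValue_eq_zero (fun n => by
    rw [← sub_eq_zero, ← hdual0 n,
      sum_filter_eq_congr _ _ _ fun k e => Bsus e.1 e.2 * (lam k - ∑ ω, nu k ω + η0 e)]) δ0
  have hrent ω := flowValue_eq_zero (fun n => by
    rw [← sub_eq_zero, ← hdual n ω,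
      sum_filter_eq_congr _ _ _ fun k e => Bsus e.1 e.2 * (nu k ω + η e ω)]) (δw · ω)
  simp only [flowValue_add, flowValue_sub, flowValue_sum, flowValue_sub_potential]
    at hrent0 hrent hrt
  rw [sum_comm, hsched, sum_congr rfl fun ω _ => hrt ω, sum_sub_distrib]
  have hrent_total := sum_congr rfl fun ω (_ : ω ∈ univ) => hrent ω
  rw [sum_add_distrib, sum_const_zero] at hrent_total
  linarith

end DCNetwork

theorem vres_expected_profit_nonneg {Scen : Type*} [Fintype Scen] {π nu W wspi aD : Scen → ℝ}
    {lam Cw wsch mu : ℝ} (hπ : ∀ ω, π ω ≠ 0) (hwsch : 0 ≤ wsch) (hmu : 0 ≤ mu)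
    (hspi : ∀ ω, wspi ω ≤ W ω) (hdual : ∀ ω, 0 ≤ -(π ω * Cw) + nu ω + aD ω)
    (hcs : ∀ ω, aD ω * (W ω - wspi ω) = 0) (hcs_sch : wsch * (-lam + ∑ ω, nu ω + mu) = 0) :
    0 ≤ lam * wsch + ∑ ω, π ω * ((nu ω / π ω) * (W ω - wsch - wspi ω) - Cw * (W ω - wspi ω)) := by
  have hsched : lam * wsch = wsch * mu + ∑ ω, wsch * nu ω := by
    linear_combination mul_sum univ nu wsch - hcs_sch
  have hrt ω : π ω * ((nu ω / π ω) * (W ω - wsch - wspi ω) - Cw * (W ω - wspi ω))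
      = (W ω - wspi ω) * (-(π ω * Cw) + nu ω + aD ω) - wsch * nu ω := by
    linear_combination (W ω - wsch - wspi ω) * mul_div_cancel₀ (nu ω) (hπ ω) - hcs ω
  rw [hsched, sum_congr rfl fun ω _ => hrt ω, sum_sub_distrib, add_add_sub_cancel]
  exact add_nonneg (mul_nonneg hwsch hmu)
    (sum_nonneg fun ω _ => mul_nonneg (sub_nonneg.mpr (hspi ω)) (hdual ω))

theorem generator_expected_profit_nonneg {Scen : Type*} [Fintype Scen]
    {π nu ru rd xu xd xx yy : Scen → ℝ} {lam C Cu Cd p ρ : ℝ} (hπ : ∀ ω, π ω ≠ 0)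
    (hp : 0 ≤ p) (hρ : 0 ≤ ρ) (hru : ∀ ω, 0 ≤ ru ω) (hrd : ∀ ω, 0 ≤ rd ω)
    (hcap : ∀ ω, 0 ≤ p + ru ω - rd ω)
    (hxu : ∀ ω, 0 ≤ xu ω) (hxd : ∀ ω, 0 ≤ xd ω) (hxx : ∀ ω, 0 ≤ xx ω)
    (hcs_yy : ∀ ω, yy ω * (p + ru ω - rd ω) = 0)
    (hcs_p : p * (C - lam + ρ + ∑ ω, (xx ω - yy ω)) = 0)
    (hcs_ru : ∀ ω, ru ω * (π ω * Cu - nu ω + xu ω + xx ω - yy ω) = 0)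
    (hcs_rd : ∀ ω, rd ω * (-(π ω * Cd) + nu ω + xd ω - xx ω + yy ω) = 0) :
    0 ≤ (lam - C) * p + ∑ ω, π ω * ((nu ω / π ω - Cu) * ru ω - (nu ω / π ω - Cd) * rd ω) := by
  have hsched : (lam - C) * p = p * ρ + ∑ ω, p * (xx ω - yy ω) := by
    linear_combination mul_sum univ (fun ω => xx ω - yy ω) p - hcs_p
  have hrt ω : p * (xx ω - yy ω)
        + π ω * ((nu ω / π ω - Cu) * ru ω - (nu ω / π ω - Cd) * rd ω)
      = ru ω * xu ω + rd ω * xd ω + xx ω * (p + ru ω - rd ω) := by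
    linear_combination (ru ω - rd ω) * mul_div_cancel₀ (nu ω) (hπ ω)
      - hcs_ru ω - hcs_rd ω - hcs_yy ω
  rw [hsched, add_assoc, ← sum_add_distrib, sum_congr rfl fun ω _ => hrt ω]
  exact add_nonneg (mul_nonneg hp hρ) (sum_nonneg fun ω _ => add_nonneg
    (add_nonneg (mul_nonneg (hru ω) (hxu ω)) (mul_nonneg (hrd ω) (hxd ω)))
    (mul_nonneg (hxx ω) (hcap ω)))

theorem so_pricing_revenue_adequacy_general
    {Bus Gen Load Scen : Type*}
    [Fintype Bus] [Fintype Gen] [Fintype Load] [Fintype Scen] [DecidableEq Bus]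
    (bI : Gen → Bus) (bJ : Load → Bus)
    (Lines : Finset (Bus × Bus))
    (Bsus : Bus → Bus → ℝ) (Cap : Bus × Bus → ℝ) (hCap : ∀ e ∈ Lines, 0 ≤ Cap e)
    (C Cu Cd : Gen → ℝ) (Cw : Bus → ℝ)
    (Ld : Load → ℝ)
    (W : Bus → Scen → ℝ)
    (π : Scen → ℝ) (hπ : ∀ ω, 0 < π ω)
    -- primal variables (first stage and per scenario)
    (p : Gen → ℝ) (wsch : Bus → ℝ) (δ0 : Bus → ℝ)
    (ruw rdw : Gen → Scen → ℝ) (sw : Load → Scen → ℝ)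
    (wspiw : Bus → Scen → ℝ) (δw : Bus → Scen → ℝ)
    -- dual variables
    (lam : Bus → ℝ) (nu : Bus → Scen → ℝ)
    (mu : Bus → ℝ) (ρ : Gen → ℝ) (aD : Bus → Scen → ℝ)
    (xu xd yy xx : Gen → Scen → ℝ)
    (η0 : Bus × Bus → ℝ) (η : Bus × Bus → Scen → ℝ)
    -- primal feasibility: nonnegativity
    (hp : ∀ i, 0 ≤ p i) (hwsch : ∀ n, 0 ≤ wsch n)
    (hruw : ∀ i ω, 0 ≤ ruw i ω) (hrdw : ∀ i ω, 0 ≤ rdw i ω)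
    -- primal feasibility: scheduling-stage balance
    (hbal0 : ∀ n, (∑ i ∈ univ.filter (fun i => bI i = n), p i) + wsch n
        - (∑ e ∈ Lines.filter (fun e => e.1 = n), Bsus e.1 e.2 * (δ0 e.1 - δ0 e.2))
        = ∑ j ∈ univ.filter (fun j => bJ j = n), Ld j)
    -- primal feasibility: per-scenario real-time balance
    (hbal1 : ∀ n ω, (∑ i ∈ univ.filter (fun i => bI i = n), (ruw i ω - rdw i ω))
        + (∑ j ∈ univ.filter (fun j => bJ j = n), sw j ω)
        + (W n ω - wsch n - wspiw n ω)
        + (∑ e ∈ Lines.filter (fun e => e.1 = n),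
            Bsus e.1 e.2 * (δ0 e.1 - δw e.1 ω - δ0 e.2 + δw e.2 ω)) = 0)
    -- primal feasibility: bounds
    (hspiU : ∀ n ω, wspiw n ω ≤ W n ω)
    (hcapL : ∀ i ω, 0 ≤ p i + ruw i ω - rdw i ω)
    -- dual feasibility: nonnegativity of inequality duals
    (hmu : ∀ n, 0 ≤ mu n) (hρ : ∀ i, 0 ≤ ρ i)
    (hxu : ∀ i ω, 0 ≤ xu i ω) (hxd : ∀ i ω, 0 ≤ xd i ω)
    (hxx : ∀ i ω, 0 ≤ xx i ω)
    (hη0 : ∀ e ∈ Lines, 0 ≤ η0 e) (hη : ∀ ω, ∀ e ∈ Lines, 0 ≤ η e ω)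
    -- dual feasibility: one dual constraint per primal variable
    (dfδ0 : ∀ n, (∑ e ∈ Lines.filter (fun e => e.1 = n),
          Bsus e.1 e.2 * (lam n - (∑ ω : Scen, nu n ω) + η0 e))
        - (∑ e ∈ Lines.filter (fun e => e.2 = n),
          Bsus e.1 e.2 * (lam e.1 - (∑ ω : Scen, nu e.1 ω) + η0 e)) = 0)
    (dfwspi : ∀ n ω, 0 ≤ -(π ω * Cw n) + nu n ω + aD n ω)
    (dfδw : ∀ n ω, (∑ e ∈ Lines.filter (fun e => e.1 = n),
          Bsus e.1 e.2 * (nu n ω + η e ω))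
        - (∑ e ∈ Lines.filter (fun e => e.2 = n),
          Bsus e.1 e.2 * (nu e.1 ω + η e ω)) = 0)
    -- complementary slackness: dual variable times primal slack
    (csaD : ∀ n ω, aD n ω * (W n ω - wspiw n ω) = 0)
    (csyy : ∀ i ω, yy i ω * (p i + ruw i ω - rdw i ω) = 0)
    (csη0 : ∀ e ∈ Lines, η0 e * (Cap e - Bsus e.1 e.2 * (δ0 e.1 - δ0 e.2)) = 0)
    (csη : ∀ ω, ∀ e ∈ Lines, η e ω * (Cap e - Bsus e.1 e.2 * (δw e.1 ω - δw e.2 ω)) = 0)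
    -- complementary slackness: primal variable times dual slack
    (dsp : ∀ i, p i * (C i - lam (bI i) + ρ i + ∑ ω : Scen, (xx i ω - yy i ω)) = 0)
    (dswsch : ∀ n, wsch n * (-lam n + (∑ ω : Scen, nu n ω) + mu n) = 0)
    (dsru : ∀ i ω, ruw i ω * (π ω * Cu i - nu (bI i) ω + xu i ω + xx i ω - yy i ω) = 0)
    (dsrd : ∀ i ω, rdw i ω * (-(π ω * Cd i) + nu (bI i) ω + xd i ω - xx i ω + yy i ω) = 0) :
    -- (i) revenue adequacy in expectation of the market administrator
    (0 ≤ -(∑ n : Bus, lam n * ((∑ i ∈ univ.filter (fun i => bI i = n), p i) + wsch n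
            - ∑ j ∈ univ.filter (fun j => bJ j = n), Ld j))
        - ∑ n : Bus, ∑ ω : Scen, nu n ω *
            ((∑ i ∈ univ.filter (fun i => bI i = n), (ruw i ω - rdw i ω))
              - (wspiw n ω + wsch n - W n ω)
              + ∑ j ∈ univ.filter (fun j => bJ j = n), sw j ω))
    -- (ii) cost recovery in expectation of every VRES generator
    ∧ (∀ n : Bus, 0 ≤ lam n * wsch n
        + ∑ ω : Scen, π ω * ((nu n ω / π ω) * (W n ω - wsch n - wspiw n ω)
            - Cw n * (W n ω - wspiw n ω)))
    -- (iii) cost recovery in expectation of every conventional generator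
    ∧ (∀ i : Gen, 0 ≤ (lam (bI i) - C i) * p i
        + ∑ ω : Scen, π ω * ((nu (bI i) ω / π ω - Cu i) * ruw i ω
            - (nu (bI i) ω / π ω - Cd i) * rdw i ω)) := by
  have hπ_ne ω : π ω ≠ 0 := (hπ ω).ne'
  refine ⟨?_, fun n => ?_, fun i => ?_⟩
  · rw [merchandising_surplus_eq_congestion_rent (fun n => ?_) (fun n ω => ?_) dfδ0 dfδw]
    · exact add_nonneg (flowValue_nonneg hCap hη0 csη0)
        (sum_nonneg fun ω _ => flowValue_nonneg hCap (hη ω) (csη ω))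
    · linarith [hbal0 n]
    · linarith [hbal1 n ω]
  · exact vres_expected_profit_nonneg hπ_ne (hwsch n) (hmu n) (hspiU n) (dfwspi n) (csaD n)
      (dswsch n)
  · exact generator_expected_profit_nonneg hπ_ne (hp i) (hρ i) (hruw i) (hrdw i) (hcapL i) (hxu i)
      (hxd i) (hxx i) (csyy i) (dsp i) (dsru i) (dsrd i)

/-- Theorem 2: revenue adequacy of the stochastic pricing scheme of Morales et al.
The hypotheses encode an optimal primal-dual pair of the SO (two-stage stochastic)
linear program via primal feasibility, dual feasibility, and complementary slackness. -/
theorem so_pricing_revenue_adequacy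
    {Bus Gen Load Scen : Type*}
    [Fintype Bus] [Fintype Gen] [Fintype Load] [Fintype Scen] [DecidableEq Bus]
    (bI : Gen → Bus) (bJ : Load → Bus)
    (Lines : Finset (Bus × Bus))
    (Bsus : Bus → Bus → ℝ) (Cap : Bus × Bus → ℝ) (hCap : ∀ e ∈ Lines, 0 ≤ Cap e)
    (C Cu Cd : Gen → ℝ) (Cw : Bus → ℝ) (V : Load → ℝ)
    (Ld : Load → ℝ) (hLd : ∀ j, 0 ≤ Ld j)
    (Pbar Rubar Rdbar : Gen → ℝ)
    (hPbar : ∀ i, 0 ≤ Pbar i) (hRubar : ∀ i, 0 ≤ Rubar i) (hRdbar : ∀ i, 0 ≤ Rdbar i)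
    (Wbar : Bus → ℝ) (hWbar : ∀ n, 0 ≤ Wbar n)
    (W : Bus → Scen → ℝ) (hW : ∀ n ω, 0 ≤ W n ω)
    (π : Scen → ℝ) (hπ : ∀ ω, 0 < π ω) (hπsum : ∑ ω : Scen, π ω = 1)
    -- primal variables (first stage and per scenario)
    (p : Gen → ℝ) (wsch : Bus → ℝ) (δ0 : Bus → ℝ)
    (ruw rdw : Gen → Scen → ℝ) (sw : Load → Scen → ℝ)
    (wspiw : Bus → Scen → ℝ) (δw : Bus → Scen → ℝ)
    -- dual variables
    (lam : Bus → ℝ) (nu : Bus → Scen → ℝ)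
    (mu : Bus → ℝ) (ρ : Gen → ℝ) (aD : Bus → Scen → ℝ)
    (xu xd yy xx : Gen → Scen → ℝ) (xs : Load → Scen → ℝ)
    (η0 : Bus × Bus → ℝ) (η : Bus × Bus → Scen → ℝ)
    -- primal feasibility: nonnegativity
    (hp : ∀ i, 0 ≤ p i) (hwsch : ∀ n, 0 ≤ wsch n)
    (hruw : ∀ i ω, 0 ≤ ruw i ω) (hrdw : ∀ i ω, 0 ≤ rdw i ω)
    (hsw : ∀ j ω, 0 ≤ sw j ω) (hwspiw : ∀ n ω, 0 ≤ wspiw n ω)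
    -- primal feasibility: scheduling-stage balance
    (hbal0 : ∀ n, (∑ i ∈ univ.filter (fun i => bI i = n), p i) + wsch n
        - (∑ e ∈ Lines.filter (fun e => e.1 = n), Bsus e.1 e.2 * (δ0 e.1 - δ0 e.2))
        = ∑ j ∈ univ.filter (fun j => bJ j = n), Ld j)
    -- primal feasibility: per-scenario real-time balance
    (hbal1 : ∀ n ω, (∑ i ∈ univ.filter (fun i => bI i = n), (ruw i ω - rdw i ω))
        + (∑ j ∈ univ.filter (fun j => bJ j = n), sw j ω)
        + (W n ω - wsch n - wspiw n ω)
        + (∑ e ∈ Lines.filter (fun e => e.1 = n),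
            Bsus e.1 e.2 * (δ0 e.1 - δw e.1 ω - δ0 e.2 + δw e.2 ω)) = 0)
    -- primal feasibility: line limits
    (hline0 : ∀ e ∈ Lines, Bsus e.1 e.2 * (δ0 e.1 - δ0 e.2) ≤ Cap e)
    (hline1 : ∀ ω, ∀ e ∈ Lines, Bsus e.1 e.2 * (δw e.1 ω - δw e.2 ω) ≤ Cap e)
    -- primal feasibility: bounds
    (hspiU : ∀ n ω, wspiw n ω ≤ W n ω)
    (hwschU : ∀ n, wsch n ≤ Wbar n)
    (hpU : ∀ i, p i ≤ Pbar i)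
    (hruU : ∀ i ω, ruw i ω ≤ Rubar i)
    (hrdU : ∀ i ω, rdw i ω ≤ Rdbar i)
    (hcapL : ∀ i ω, 0 ≤ p i + ruw i ω - rdw i ω)
    (hcapU : ∀ i ω, p i + ruw i ω - rdw i ω ≤ Pbar i)
    (hswU : ∀ j ω, sw j ω ≤ Ld j)
    -- dual feasibility: nonnegativity of inequality duals
    (hmu : ∀ n, 0 ≤ mu n) (hρ : ∀ i, 0 ≤ ρ i) (haD : ∀ n ω, 0 ≤ aD n ω)
    (hxu : ∀ i ω, 0 ≤ xu i ω) (hxd : ∀ i ω, 0 ≤ xd i ω)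
    (hyy : ∀ i ω, 0 ≤ yy i ω) (hxx : ∀ i ω, 0 ≤ xx i ω)
    (hxs : ∀ j ω, 0 ≤ xs j ω)
    (hη0 : ∀ e ∈ Lines, 0 ≤ η0 e) (hη : ∀ ω, ∀ e ∈ Lines, 0 ≤ η e ω)
    -- dual feasibility: one dual constraint per primal variable
    (dfp : ∀ i, 0 ≤ C i - lam (bI i) + ρ i + ∑ ω : Scen, (xx i ω - yy i ω))
    (dfwsch : ∀ n, 0 ≤ -lam n + (∑ ω : Scen, nu n ω) + mu n)
    (dfδ0 : ∀ n, (∑ e ∈ Lines.filter (fun e => e.1 = n),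
          Bsus e.1 e.2 * (lam n - (∑ ω : Scen, nu n ω) + η0 e))
        - (∑ e ∈ Lines.filter (fun e => e.2 = n),
          Bsus e.1 e.2 * (lam e.1 - (∑ ω : Scen, nu e.1 ω) + η0 e)) = 0)
    (dfru : ∀ i ω, 0 ≤ π ω * Cu i - nu (bI i) ω + xu i ω + xx i ω - yy i ω)
    (dfrd : ∀ i ω, 0 ≤ -(π ω * Cd i) + nu (bI i) ω + xd i ω - xx i ω + yy i ω)
    (dfs : ∀ j ω, 0 ≤ π ω * V j - nu (bJ j) ω + xs j ω)
    (dfwspi : ∀ n ω, 0 ≤ -(π ω * Cw n) + nu n ω + aD n ω)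
    (dfδw : ∀ n ω, (∑ e ∈ Lines.filter (fun e => e.1 = n),
          Bsus e.1 e.2 * (nu n ω + η e ω))
        - (∑ e ∈ Lines.filter (fun e => e.2 = n),
          Bsus e.1 e.2 * (nu e.1 ω + η e ω)) = 0)
    -- complementary slackness: dual variable times primal slack
    (csρ : ∀ i, ρ i * (Pbar i - p i) = 0)
    (csmu : ∀ n, mu n * (Wbar n - wsch n) = 0)
    (csaD : ∀ n ω, aD n ω * (W n ω - wspiw n ω) = 0)
    (csxu : ∀ i ω, xu i ω * (Rubar i - ruw i ω) = 0)
    (csxd : ∀ i ω, xd i ω * (Rdbar i - rdw i ω) = 0)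
    (csyy : ∀ i ω, yy i ω * (p i + ruw i ω - rdw i ω) = 0)
    (csxx : ∀ i ω, xx i ω * (Pbar i - p i - ruw i ω + rdw i ω) = 0)
    (csxs : ∀ j ω, xs j ω * (Ld j - sw j ω) = 0)
    (csη0 : ∀ e ∈ Lines, η0 e * (Cap e - Bsus e.1 e.2 * (δ0 e.1 - δ0 e.2)) = 0)
    (csη : ∀ ω, ∀ e ∈ Lines, η e ω * (Cap e - Bsus e.1 e.2 * (δw e.1 ω - δw e.2 ω)) = 0)
    -- complementary slackness: primal variable times dual slack
    (dsp : ∀ i, p i * (C i - lam (bI i) + ρ i + ∑ ω : Scen, (xx i ω - yy i ω)) = 0)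
    (dswsch : ∀ n, wsch n * (-lam n + (∑ ω : Scen, nu n ω) + mu n) = 0)
    (dsru : ∀ i ω, ruw i ω * (π ω * Cu i - nu (bI i) ω + xu i ω + xx i ω - yy i ω) = 0)
    (dsrd : ∀ i ω, rdw i ω * (-(π ω * Cd i) + nu (bI i) ω + xd i ω - xx i ω + yy i ω) = 0)
    (dss : ∀ j ω, sw j ω * (π ω * V j - nu (bJ j) ω + xs j ω) = 0)
    (dswspi : ∀ n ω, wspiw n ω * (-(π ω * Cw n) + nu n ω + aD n ω) = 0) :
    -- (i) revenue adequacy in expectation of the market administrator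
    (0 ≤ -(∑ n : Bus, lam n * ((∑ i ∈ univ.filter (fun i => bI i = n), p i) + wsch n
            - ∑ j ∈ univ.filter (fun j => bJ j = n), Ld j))
        - ∑ n : Bus, ∑ ω : Scen, nu n ω *
            ((∑ i ∈ univ.filter (fun i => bI i = n), (ruw i ω - rdw i ω))
              - (wspiw n ω + wsch n - W n ω)
              + ∑ j ∈ univ.filter (fun j => bJ j = n), sw j ω))
    -- (ii) cost recovery in expectation of every VRES generator
    ∧ (∀ n : Bus, 0 ≤ lam n * wsch n
        + ∑ ω : Scen, π ω * ((nu n ω / π ω) * (W n ω - wsch n - wspiw n ω)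
            - Cw n * (W n ω - wspiw n ω)))
    -- (iii) cost recovery in expectation of every conventional generator
    ∧ (∀ i : Gen, 0 ≤ (lam (bI i) - C i) * p i
        + ∑ ω : Scen, π ω * ((nu (bI i) ω / π ω - Cu i) * ruw i ω
            - (nu (bI i) ω / π ω - Cd i) * rdw i ω)) :=
  so_pricing_revenue_adequacy_general bI bJ Lines Bsus Cap hCap C Cu Cd Cw Ld W π hπ p wsch δ0 ruw
    rdw sw wspiw δw lam nu mu ρ aD xu xd yy xx η0 η hp hwsch hruw hrdw hbal0 hbal1 hspiU hcapL hmu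
    hρ hxu hxd hxx hη0 hη dfδ0 dfwspi dfδw csaD csyy csη0 csη dsp dswsch dsru dsrd
end
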